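/- arXiv:2203.15179 — 4 statements merged into one kernel-verified Lean document; each statement's English description precedes it below -/
import Mathlib

section
/- Let q be an odd prime power, f(x) = (x-γ)² + γ + c a monic quadratic over 𝔽_q with critical point γ. Suppose f has orbit type (2,n) for some n ≥ 1, i.e., the post-critical orbit is O_f = {b₁, ..., b_{n+1}} with b_i = f^i(γ), where m = 2 and n are minimal with f^m(γ) = f^{m+n}(γ). Then (b_n - γ)² = -2c. -/
/-- For a monic quadratic `f(x) = (x-γ)² + γ + c` over a finite field of odd
characteristic with orbit type `(2,n)` (i.e. `f^[2] γ = f^[2+n] γ` with `(2,n)` minimal),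
one has `(b_n - γ)² = -2c` where `b_i = f^[i] γ`. -/
theorem stmt0 {F : Type*} [Field F] [Fintype F] (hchar : ringChar F ≠ 2)
    (γ c : F) (f : F → F) (hf : ∀ x, f x = (x - γ) ^ 2 + γ + c)
    (n : ℕ) (hn : 1 ≤ n)
    (horb : f^[2 + n] γ = f^[2] γ)
    (hmin : ∀ m' n' : ℕ, 1 ≤ n' → f^[m' + n'] γ = f^[m'] γ → 2 ≤ m' ∧ n ≤ n') :
    (f^[n] γ - γ) ^ 2 = -2 * c := by
  have hstep : ∀ k : ℕ, f^[k + 1] γ = (f^[k] γ - γ) ^ 2 + γ + c := by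
    intro k
    rw [Function.iterate_succ_apply', hf]
  have h1 : f^[1] γ = γ + c := by
    have := hstep 0
    simpa using this
  have h2 : f^[2] γ = c ^ 2 + γ + c := by
    have := hstep 1
    rw [h1] at this
    simpa using this
  have h2n : f^[2 + n] γ = (f^[1 + n] γ - γ) ^ 2 + γ + c := by
    have := hstep (1 + n)
    simpa [show 1 + n + 1 = 2 + n by ring] using this
  have key : (f^[1 + n] γ - γ) ^ 2 = c ^ 2 := by
    have := horb
    rw [h2n, h2] at this
    linear_combination this
  have hcases : f^[1 + n] γ - γ = c ∨ f^[1 + n] γ - γ = -c := by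
    have : (f^[1 + n] γ - γ - c) * (f^[1 + n] γ - γ + c) = 0 := by ring_nf; linear_combination key
    rcases mul_eq_zero.mp this with h | h
    · left; linear_combination h
    · right; linear_combination h
  rcases hcases with h | h
  · exfalso
    have heq : f^[1 + n] γ = f^[1] γ := by rw [h1]; linear_combination h
    have := (hmin 1 n hn heq).1
    omega
  · have hval : f^[1 + n] γ = γ - c := by linear_combination h
    have := hstep n
    rw [show n + 1 = 1 + n by ring, hval] at this
    linear_combination -this
end

section
/- Let q be an odd prime power, f(x) = (x-γ)² + γ + c a monic quadratic over 𝔽_q with critical point γ, with orbit type (3,1). With b_i = f^i(γ), one has (b₁-γ)² + (b₂-γ)² = -2c. -/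
/-- For a monic quadratic `f(x) = (x-γ)² + γ + c` over a finite field of odd
characteristic with orbit type `(3,1)`, one has `(b₁-γ)² + (b₂-γ)² = -2c`. -/
theorem stmt2 {F : Type*} [Field F] [Fintype F] (hchar : ringChar F ≠ 2)
    (γ c : F) (f : F → F) (hf : ∀ x, f x = (x - γ) ^ 2 + γ + c)
    (horb : f^[3 + 1] γ = f^[3] γ)
    (hmin : ∀ m' n' : ℕ, 1 ≤ n' → f^[m' + n'] γ = f^[m'] γ → 3 ≤ m' ∧ 1 ≤ n') :
    (f^[1] γ - γ) ^ 2 + (f^[2] γ - γ) ^ 2 = -2 * c := by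
  have h1 : f^[1] γ = γ + c := by simp [hf]
  have h2 : f^[2] γ = c ^ 2 + γ + c := by
    rw [show (2 : ℕ) = 1 + 1 from rfl, Function.iterate_succ_apply', h1, hf]; ring
  have h3 : f^[3] γ = (c ^ 2 + c) ^ 2 + γ + c := by
    rw [show (3 : ℕ) = 2 + 1 from rfl, Function.iterate_succ_apply', h2, hf]; ring
  have h4 : f^[3 + 1] γ = (f^[3] γ - γ) ^ 2 + γ + c := by
    rw [Function.iterate_succ_apply', hf]
  have hne : f^[3] γ ≠ f^[2] γ := by
    intro h
    have := (hmin 2 1 le_rfl (by simpa using h)).1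
    omega
  -- t := f^[3] γ - γ, s := c^2 + c
  have hkey : (f^[3] γ - γ) ^ 2 = (c ^ 2 + c) ^ 2 := by
    have : (f^[3] γ - γ) ^ 2 + γ + c = f^[3] γ := by rw [← h4, horb]
    rw [h3] at this ⊢
    linear_combination this
  have hdiff : f^[3] γ - γ ≠ c ^ 2 + c := by
    intro h
    apply hne
    rw [h2]; linear_combination h
  have hor : f^[3] γ - γ = -(c ^ 2 + c) := by
    have hz : (f^[3] γ - γ - (c ^ 2 + c)) * (f^[3] γ - γ + (c ^ 2 + c)) = 0 := by
      linear_combination hkey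
    rcases mul_eq_zero.mp hz with h | h
    · exact absurd (by linear_combination h) hdiff
    · linear_combination h
  rw [h1, h2]
  have h3' : (c ^ 2 + c) ^ 2 + c = -(c ^ 2 + c) := by
    have := hor
    rw [h3] at this
    linear_combination this
  linear_combination h3'
end

section
/- Let q be an odd prime power, f(x) = (x-γ)² + γ + c a monic quadratic over 𝔽_q with critical point γ, with orbit type (3,1). Then b₃ - γ = -(b₂ - γ), where b_i = f^i(γ). -/
/-- For a monic quadratic `f(x) = (x-γ)² + γ + c` over a finite field of odd
characteristic with orbit type `(3,1)`, one has `b₃ - γ = -(b₂ - γ)`. -/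
theorem stmt3 {F : Type*} [Field F] [Fintype F] (hchar : ringChar F ≠ 2)
    (γ c : F) (f : F → F) (hf : ∀ x, f x = (x - γ) ^ 2 + γ + c)
    (horb : f^[3 + 1] γ = f^[3] γ)
    (hmin : ∀ m' n' : ℕ, 1 ≤ n' → f^[m' + n'] γ = f^[m'] γ → 3 ≤ m' ∧ 1 ≤ n') :
    f^[3] γ - γ = -(f^[2] γ - γ) := by
  have e4 : f^[3 + 1] γ = f (f^[3] γ) := Function.iterate_succ_apply' f 3 γ
  have e3 : f^[3] γ = f (f^[2] γ) := Function.iterate_succ_apply' f 2 γ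
  set u := f^[2] γ - γ with hu
  set v := f^[3] γ - γ with hv
  have h1 : v = u ^ 2 + c := by
    rw [hv, e3, hf]; ring
  have h2 : v = v ^ 2 + c := by
    have h := horb
    rw [e4, hf] at h
    linear_combination -h
  have hprod : (v - u) * (v + u) = 0 := by linear_combination h1 - h2
  rcases mul_eq_zero.mp hprod with h | h
  · exfalso
    have hvu : f^[3] γ = f^[2] γ := by
      rw [hv, hu] at h
      linear_combination h
    have heq : f^[2 + 1] γ = f^[2] γ := hvu
    have := hmin 2 1 le_rfl heq
    omega
  · linear_combination h
end

section
/- Let 𝔽_q be a finite field of odd characteristic, f ∈ 𝔽_q[x] a monic quadratic with critical point γ and orbit type (2,n) for some n ≥ 1, and g ∈ 𝔽_q[x] a monic irreducible polynomial of even degree whose f-type starts with ns (i.e., g(b₁) is a nonsquare and g(b₂) is a square in 𝔽_q, where b_i = f^i(γ)). Suppose g(f(x)) is irreducible and g(f²(x)) = h(x-γ)h(-(x-γ)) with h ∈ 𝔽_q[x] monic irreducible, and all iterates are separable. Then h(b_n - γ) is a square in 𝔽_q, and consequently every irreducible factor of g(f²(x)) takes a square value at b_n. -/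
/-!
Let `K = 𝔽_q(ρ)` with `h(ρ) = 0`, a field of degree `2e` over `𝔽_q` where `e = deg g`, and
let `σ = Frob_q^e`, the involution of `K` over `𝔽_{q^e}`. Since `γ + ρ` is a root of `g(f²)`,
the element `α = f(γ + ρ)` is a root of the irreducible `g(f)` of degree `2e`, so `σ` moves it,
while `f(α)` is a root of `g` and is fixed by `σ`. Hence `σα = 2γ - α`, i.e.
`(σρ)² = -ρ² - 2c = τ² - ρ²` whenever `τ² = -2c`. For `u = τ - ρ` and `w = τ - ρ - σρ` this
reads `2·u·σ(u) = w²` with `w ∈ 𝔽_{q^e}`; as `e` is even, `2` is a square in `𝔽_{q^e}`, so the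
norm of `u` to `𝔽_{q^e}` is a square there and `u` is a square in `K`. Therefore
`h(τ) = N_{K/𝔽_q}(τ - ρ)` is a square in `𝔽_q`.

The orbit type `(2, n)` forces `f^{n+1}(γ) = 2γ - f(γ) = γ - c`, i.e. `(b_n - γ)² = -2c`, and
the monic irreducible factors of `g(f²)` are `h(x - γ)` and `h(γ - x)`.
-/

open Polynomial

namespace FiniteField

variable {F : Type*} [Field F] [Fintype F]

theorem frobeniusAlgHom_pow_apply (K : Type*) [Field K] [Algebra F K] (j : ℕ) (x : K) :
    (frobeniusAlgHom F K ^ j) x = x ^ Fintype.card F ^ j := by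
  rw [AlgHom.coe_pow, coe_frobeniusAlgHom, pow_iterate]

theorem orderOf_frobeniusAlgHom_adjoinRoot {p : F[X]} [Fact (Irreducible p)] :
    orderOf (frobeniusAlgHom F (AdjoinRoot p)) = p.natDegree := by
  have hp : p ≠ 0 := (Fact.out : Irreducible p).ne_zero
  have := (AdjoinRoot.powerBasis hp).finite
  have : Finite (AdjoinRoot p) := Module.finite_of_finite F
  rw [orderOf_frobeniusAlgHom, (AdjoinRoot.powerBasis hp).finrank, AdjoinRoot.powerBasis_dim]

theorem pow_card_pow_eq_self_iff {K : Type*} [Field K] [Algebra F K] {p : F[X]}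
    (hp : Irreducible p) {x : K} (hx : aeval x p = 0) (j : ℕ) :
    x ^ Fintype.card F ^ j = x ↔ p.natDegree ∣ j := by
  have := Fact.mk hp
  let φ := AdjoinRoot.liftAlgHom p (Algebra.ofId F K) x hx
  have hφ : φ (AdjoinRoot.root p) = x := AdjoinRoot.liftAlgHom_root ..
  have hφinj : Function.Injective φ := RingHom.injective (φ : AdjoinRoot p →+* K)
  rw [← orderOf_frobeniusAlgHom_adjoinRoot, orderOf_dvd_iff_pow_eq_one, ← hφ, ← map_pow,
    hφinj.eq_iff, ← frobeniusAlgHom_pow_apply]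
  exact ⟨fun h => AdjoinRoot.algHom_ext h, fun h => by rw [h, AlgHom.one_apply]⟩

section
variable {K : Type*} [Field K] [Fintype K]

theorem pow_card_pow_sub_one_div_two_eq_one (hK : ringChar K ≠ 2) {a : K} (ha : a ≠ 0)
    {e : ℕ} (he : Even e) : a ^ ((Fintype.card K ^ e - 1) / 2) = 1 := by
  obtain ⟨r, hr⟩ : ∃ r, Fintype.card K = 2 * r + 1 :=
    ⟨Fintype.card K / 2, by have := odd_card_of_char_ne_two hK; omega⟩
  obtain ⟨l, rfl⟩ := he
  obtain ⟨m, hm⟩ : (Fintype.card K ^ 2 - 1) ∣ Fintype.card K ^ (l + l) - 1 := by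
    rw [← two_mul, pow_mul]
    simpa using Nat.sub_dvd_pow_sub_pow (Fintype.card K ^ 2) 1 l
  have hexp : (Fintype.card K ^ (l + l) - 1) / 2 = (Fintype.card K - 1) * ((r + 1) * m) := by
    rw [hm, hr, show (2 * r + 1) ^ 2 - 1 = 2 * ((2 * r) * ((r + 1))) by
      rw [Nat.sub_eq_of_eq_add]; ring]
    rw [Nat.mul_assoc, Nat.mul_div_cancel_left _ two_pos]
    simp only [add_tsub_cancel_right]
    ring
  rw [hexp, pow_mul, pow_card_sub_one_eq_one a ha, one_pow]

theorem isSquare_of_mul_pow_succ_eq_sq (hK : ringChar K ≠ 2) {Q : ℕ}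
    (hQ : Fintype.card K = Q ^ 2) {a u w : K} (ha : a ^ ((Q - 1) / 2) = 1) (hw : w ^ Q = w)
    (h : a * u ^ (Q + 1) = w ^ 2) : IsSquare u := by
  rcases eq_or_ne u 0 with rfl | hu
  · exact IsSquare.zero
  obtain ⟨k, rfl⟩ : ∃ k, Q = 2 * k + 1 := by
    have hodd : Odd (Q ^ 2) := hQ ▸ Nat.odd_iff.mpr (odd_card_of_char_ne_two hK)
    exact (Nat.odd_pow_iff two_ne_zero).mp hodd
  have hk : k ≠ 0 := by
    rintro rfl
    have := Fintype.one_lt_card (α := K)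
    simp_all
  simp only [add_tsub_cancel_right, Nat.mul_div_cancel_left _ two_pos] at ha
  have hw0 : w ≠ 0 := by
    rintro rfl
    have ha0 : a = 0 := by simpa [hu] using h
    simp [ha0, hk] at ha
  have hw1 : w ^ (2 * k) = 1 := by
    refine mul_right_cancel₀ hw0 ?_
    rw [← pow_succ, hw, one_mul]
  rw [isSquare_iff hK hu, hQ, show (2 * k + 1) ^ 2 / 2 = (2 * k + 1 + 1) * k by
    rw [show (2 * k + 1) ^ 2 = 2 * ((2 * k + 1 + 1) * k) + 1 by ring, Nat.mul_add_div two_pos]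
    simp]
  calc u ^ ((2 * k + 1 + 1) * k) = (a * u ^ (2 * k + 1 + 1)) ^ k := by
        rw [mul_pow, ha, one_mul, pow_mul]
    _ = 1 := by rw [h, ← pow_mul, hw1]

end

end FiniteField

theorem PowerBasis.norm_algebraMap_sub_gen {R S : Type*} [CommRing R] [Ring S] [Algebra R S]
    (pb : PowerBasis R S) (t : R) :
    Algebra.norm R (algebraMap R S t - pb.gen) = (minpoly R pb.gen).eval t := by
  classical
  rw [Algebra.norm_eq_matrix_det pb.basis, map_sub, AlgHom.commutes, ← charpoly_leftMulMatrix,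
    Matrix.eval_charpoly, Matrix.algebraMap_eq_diagonal]
  rfl

theorem Irreducible.comp_of_natDegree_eq_one {F : Type*} [Field F] {p L : F[X]}
    (hp : Irreducible p) (hL : L.natDegree = 1) : Irreducible (p.comp L) := by
  have ha : L.coeff 1 ≠ 0 := by
    rw [← hL, coeff_natDegree, leadingCoeff_ne_zero]; rintro rfl; simp at hL
  have := invertibleOfNonzero ha
  rw [eq_X_add_C_of_natDegree_le_one hL.le, comp_eq_aeval, ← algEquivCMulXAddC_apply]
  exact hp.map _

theorem Polynomial.Monic.comp_neg_X_sub_C {R : Type*} [CommRing R] [IsDomain R] {p : R[X]}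
    (hp : p.Monic) (hev : Even p.natDegree) (r : R) : (p.comp (-(X - C r))).Monic := by
  rw [Monic, leadingCoeff_comp (by rw [natDegree_neg, natDegree_X_sub_C]; exact one_ne_zero),
    hp.leadingCoeff, leadingCoeff_neg, (monic_X_sub_C r).leadingCoeff, one_mul, hev.neg_one_pow]

section CriticalQuadratic

open FiniteField

variable {F : Type*} [Field F]

noncomputable def critQuadratic (γ c : F) : F[X] := (X - C γ) ^ 2 + C γ + C c

theorem aeval_critQuadratic {K : Type*} [CommRing K] [Algebra F K] (γ c : F) (x : K) :
    aeval x (critQuadratic γ c) =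
      (x - algebraMap F K γ) ^ 2 + algebraMap F K γ + algebraMap F K c := by
  simp [critQuadratic]

theorem natDegree_critQuadratic (γ c : F) : (critQuadratic γ c).natDegree = 2 := by
  rw [critQuadratic, add_assoc, ← C_add, natDegree_add_C, natDegree_pow, natDegree_X_sub_C]

theorem natDegree_eq_two_mul_of_comp_critQuadratic_eq {γ c : F} {g h : F[X]} (hh : h ≠ 0)
    (hfac : g.comp ((critQuadratic γ c).comp (critQuadratic γ c)) =
      h.comp (X - C γ) * h.comp (-(X - C γ))) :
    h.natDegree = 2 * g.natDegree := by
  have h₁ : (h.comp (X - C γ)).natDegree = h.natDegree := by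
    rw [natDegree_comp, natDegree_X_sub_C, mul_one]
  have h₂ : (h.comp (-(X - C γ))).natDegree = h.natDegree := by
    rw [natDegree_comp, natDegree_neg, natDegree_X_sub_C, mul_one]
  have hne : ∀ L : F[X], L.natDegree = 1 → h.comp L ≠ 0 := fun L hL => by
    have hL0 : L ≠ 0 := by rintro rfl; simp at hL
    rw [← leadingCoeff_ne_zero, leadingCoeff_comp (by rw [hL]; exact one_ne_zero)]
    exact mul_ne_zero (leadingCoeff_ne_zero.mpr hh) (pow_ne_zero _ (leadingCoeff_ne_zero.mpr hL0))
  have := congrArg natDegree hfac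
  rw [natDegree_mul (hne _ (natDegree_X_sub_C γ))
      (hne _ (by rw [natDegree_neg, natDegree_X_sub_C])), h₁, h₂, natDegree_comp, natDegree_comp,
    natDegree_critQuadratic] at this
  omega

variable [Fintype F]

theorem frobeniusAlgHom_pow_apply_sq {K : Type*} [Field K] [Algebra F K] {γ c : F} {g : F[X]}
    (hg : Irreducible g) (hgf : Irreducible (g.comp (critQuadratic γ c))) {ρ : K}
    (hρ : aeval (algebraMap F K γ + ρ)
      (g.comp ((critQuadratic γ c).comp (critQuadratic γ c))) = 0) :
    ((frobeniusAlgHom F K ^ g.natDegree) ρ) ^ 2 = -(ρ ^ 2 + 2 * algebraMap F K c) := by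
  set σ := frobeniusAlgHom F K ^ g.natDegree
  set Γ := algebraMap F K γ
  set α := aeval (Γ + ρ) (critQuadratic γ c)
  have hαρ : α = ρ ^ 2 + Γ + algebraMap F K c := by
    simp only [α, Γ, aeval_critQuadratic]
    ring
  have hα : aeval α (g.comp (critQuadratic γ c)) = 0 := by
    rwa [← comp_assoc, aeval_comp] at hρ
  have hσ : ∀ x, σ x = x ^ Fintype.card F ^ g.natDegree := frobeniusAlgHom_pow_apply K _
  have hδ : σ (aeval α (critQuadratic γ c)) = aeval α (critQuadratic γ c) := by
    rw [hσ, pow_card_pow_eq_self_iff hg (by rwa [aeval_comp] at hα)]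
  have hσα : σ α ≠ α := by
    rw [hσ, Ne, pow_card_pow_eq_self_iff hgf hα, natDegree_comp, natDegree_critQuadratic]
    intro hdvd
    have := Nat.le_of_dvd hg.natDegree_pos hdvd
    have := hg.natDegree_pos
    omega
  rw [← aeval_algHom_apply, aeval_critQuadratic, aeval_critQuadratic] at hδ
  have hσα' : σ α = 2 * Γ - α := by
    have : (σ α - α) * (σ α + α - 2 * Γ) = 0 := by linear_combination hδ
    rcases mul_eq_zero.mp this with h | h
    · exact absurd (sub_eq_zero.mp h) hσα
    · linear_combination h
  have hρα : ρ ^ 2 = α - Γ - algebraMap F K c := by rw [hαρ]; ring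
  rw [← map_pow, hρα, map_sub, map_sub, hσα', AlgHom.commutes, AlgHom.commutes, hαρ]
  ring

theorem isSquare_algebraMap_sub_root (hF : ringChar F ≠ 2) {γ c : F} {g h : F[X]}
    [Fact (Irreducible h)] (hg : Irreducible g) (hg_even : Even g.natDegree)
    (hgf : Irreducible (g.comp (critQuadratic γ c))) (hdeg : h.natDegree = 2 * g.natDegree)
    (hroot : aeval (algebraMap F (AdjoinRoot h) γ + AdjoinRoot.root h)
      (g.comp ((critQuadratic γ c).comp (critQuadratic γ c))) = 0)
    {τ : F} (hτ : τ ^ 2 = -(2 * c)) :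
    IsSquare (algebraMap F (AdjoinRoot h) τ - AdjoinRoot.root h) := by
  set K := AdjoinRoot h
  have hh0 : h ≠ 0 := (Fact.out : Irreducible h).ne_zero
  have := (AdjoinRoot.powerBasis hh0).finite
  have : Finite K := Module.finite_of_finite F
  let := Fintype.ofFinite K
  set ρ := AdjoinRoot.root h
  set T := algebraMap F K τ
  set Q := Fintype.card F ^ g.natDegree
  set σ := frobeniusAlgHom F K ^ g.natDegree
  have hσ : ∀ x, σ x = x ^ Q := frobeniusAlgHom_pow_apply K _
  have hσσ : ∀ x, σ (σ x) = x := fun x => by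
    rw [← AlgHom.mul_apply, ← pow_add, ← two_mul, ← hdeg, ← orderOf_frobeniusAlgHom_adjoinRoot,
      pow_orderOf_eq_one, AlgHom.one_apply]
  have hσρ : (σ ρ) ^ 2 = -(ρ ^ 2 + 2 * algebraMap F K c) :=
    frobeniusAlgHom_pow_apply_sq hg hgf hroot
  have hT : T ^ 2 = -(2 * algebraMap F K c) := by
    simp only [T, ← map_pow, hτ, map_neg, map_mul, map_ofNat]
  refine isSquare_of_mul_pow_succ_eq_sq (Q := Q) (a := 2) (w := T - ρ - σ ρ) ?_ ?_ ?_ ?_ ?_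
  · rwa [← Algebra.ringChar_eq F K]
  · rw [Module.card_eq_pow_finrank (K := F), (AdjoinRoot.powerBasis hh0).finrank,
      AdjoinRoot.powerBasis_dim, hdeg, mul_comm, pow_mul]
  · rw [← map_ofNat (algebraMap F K) 2, ← map_pow,
      pow_card_pow_sub_one_div_two_eq_one hF (Ring.two_ne_zero hF) hg_even, map_one]
  · rw [← hσ, map_sub, map_sub, AlgHom.commutes, hσσ]
    ring
  · rw [pow_succ, ← hσ, map_sub, AlgHom.commutes]
    linear_combination hT - hσρ

theorem isSquare_eval_of_comp_critQuadratic_eq (hF : ringChar F ≠ 2) {γ c : F} {g h : F[X]}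
    (hg : Irreducible g) (hg_even : Even g.natDegree)
    (hgf : Irreducible (g.comp (critQuadratic γ c))) (hh : h.Monic) (hh' : Irreducible h)
    (hfac : g.comp ((critQuadratic γ c).comp (critQuadratic γ c)) =
      h.comp (X - C γ) * h.comp (-(X - C γ)))
    {τ : F} (hτ : τ ^ 2 = -(2 * c)) : IsSquare (h.eval τ) := by
  have := Fact.mk hh'
  have hroot : aeval (algebraMap F (AdjoinRoot h) γ + AdjoinRoot.root h)
      (g.comp ((critQuadratic γ c).comp (critQuadratic γ c))) = 0 := by
    rw [hfac, map_mul, aeval_comp, map_sub, aeval_X, aeval_C, add_sub_cancel_left,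
      AdjoinRoot.aeval_eq, AdjoinRoot.mk_self, zero_mul]
  have hnorm := PowerBasis.norm_algebraMap_sub_gen (AdjoinRoot.powerBasis hh'.ne_zero) τ
  rw [AdjoinRoot.powerBasis_gen, AdjoinRoot.minpoly_root hh'.ne_zero, hh.leadingCoeff, inv_one,
    C_1, mul_one] at hnorm
  rw [← hnorm]
  exact (isSquare_algebraMap_sub_root hF hg hg_even hgf
    (natDegree_eq_two_mul_of_comp_critQuadratic_eq hh'.ne_zero hfac) hroot hτ).map _

end CriticalQuadratic

theorem sq_iterate_sub_eq_of_iterate_eq {F : Type*} [Field F] {f : F → F} {γ c : F}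
    (hf : ∀ x, f x = (x - γ) ^ 2 + γ + c) {n : ℕ} (horb : f^[2 + n] γ = f^[2] γ)
    (hpre : f^[1 + n] γ ≠ f γ) : (f^[n] γ - γ) ^ 2 = -(2 * c) := by
  set x := f (f^[n] γ)
  have hx : f x = f (f γ) := by
    simpa [x, add_comm, Function.iterate_succ_apply'] using horb
  have hne : x ≠ f γ := by simpa [x, add_comm, Function.iterate_succ_apply'] using hpre
  rw [hf x, hf (f γ)] at hx
  have hx' : x = γ - c := by
    have : (x - f γ) * (x + f γ - 2 * γ) = 0 := by linear_combination hx
    rcases mul_eq_zero.mp this with h | h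
    · exact absurd (sub_eq_zero.mp h) hne
    · rw [hf γ] at h; linear_combination h
  have hfx : f (f^[n] γ) = γ - c := hx'
  rw [hf] at hfx
  linear_combination hfx

theorem stmt19_general {F : Type*} [Field F] [Fintype F] (hchar : ringChar F ≠ 2)
    (γ c : F) (f : F → F) (hf : ∀ x, f x = (x - γ) ^ 2 + γ + c)
    (fp : Polynomial F) (hfp : fp = (X - C γ) ^ 2 + C γ + C c)
    (n : ℕ) (hn : 1 ≤ n)
    (horb : f^[2 + n] γ = f^[2] γ)
    (hmin : ∀ m' n' : ℕ, 1 ≤ n' → f^[m' + n'] γ = f^[m'] γ → 2 ≤ m' ∧ n ≤ n')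
    (g : Polynomial F) (hgi : Irreducible g) (hgdeg : Even g.natDegree)
    (hirr1 : Irreducible (g.comp fp))
    (h : Polynomial F) (hhm : h.Monic) (hhi : Irreducible h)
    (hfac : g.comp (fp.comp fp) = h.comp (X - C γ) * h.comp (-(X - C γ))) :
    (∃ s : F, h.eval (f^[n] γ - γ) = s ^ 2) ∧
    (∀ H : Polynomial F, H.Monic → Irreducible H → H ∣ g.comp (fp.comp fp) →
      ∃ s : F, H.eval (f^[n] γ) = s ^ 2) := by
  subst hfp
  have hτ : (f^[n] γ - γ) ^ 2 = -(2 * c) :=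
    sq_iterate_sub_eq_of_iterate_eq hf horb fun hpre =>
      absurd (hmin 1 n hn (by rwa [Function.iterate_one])).1 (by norm_num)
  have hsq : ∀ τ : F, τ ^ 2 = -(2 * c) → ∃ s, h.eval τ = s ^ 2 := fun τ hτ' => by
    obtain ⟨s, hs⟩ := isSquare_eval_of_comp_critQuadratic_eq hchar hgi hgdeg hirr1 hhm hhi hfac hτ'
    exact ⟨s, hs.trans (sq s).symm⟩
  refine ⟨hsq _ hτ, fun H hHm hHi hdvd => ?_⟩
  have hfactor : ∀ L : F[X], L.natDegree = 1 → (h.comp L).Monic → H ∣ h.comp L → H = h.comp L :=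
    fun L hL hmon hd => eq_of_monic_of_associated hHm hmon
      (hHi.associated_of_dvd (hhi.comp_of_natDegree_eq_one hL) hd)
  rw [hfac] at hdvd
  rcases hHi.prime.dvd_or_dvd hdvd with hd | hd
  · rw [hfactor _ (natDegree_X_sub_C γ) (hhm.comp_X_sub_C γ) hd]
    simpa using hsq _ hτ
  · have hdeg := natDegree_eq_two_mul_of_comp_critQuadratic_eq hhi.ne_zero hfac
    rw [hfactor _ (by rw [natDegree_neg, natDegree_X_sub_C])
      (hhm.comp_neg_X_sub_C ⟨g.natDegree, by omega⟩ γ) hd]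
    simpa using hsq (-(f^[n] γ - γ)) (by rw [neg_sq, hτ])

/-- Let `f(x) = (x-γ)² + γ + c` be a monic quadratic over a finite field of odd
characteristic with orbit type `(2,n)`, and `g` monic irreducible of even degree whose `f`-type
starts with `ns` (i.e. `g(b₁)` is a nonsquare and `g(b₂)` is a square), with all iterates
`g(f^i(x))` separable, `g(f(x))` irreducible, and `g(f²(x)) = h(x-γ)·h(-(x-γ))` for a monic
irreducible `h`. Then `h(b_n - γ)` is a square in `𝔽_q`, and consequently every monic
irreducible factor of `g(f²(x))` takes a square value at `b_n`. -/
theorem stmt19 {F : Type*} [Field F] [Fintype F] (hchar : ringChar F ≠ 2)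
    (γ c : F) (f : F → F) (hf : ∀ x, f x = (x - γ) ^ 2 + γ + c)
    (fp : Polynomial F) (hfp : fp = (X - C γ) ^ 2 + C γ + C c)
    (n : ℕ) (hn : 1 ≤ n)
    (horb : f^[2 + n] γ = f^[2] γ)
    (hmin : ∀ m' n' : ℕ, 1 ≤ n' → f^[m' + n'] γ = f^[m'] γ → 2 ≤ m' ∧ n ≤ n')
    (g : Polynomial F) (hgm : g.Monic) (hgi : Irreducible g) (hgdeg : Even g.natDegree)
    (htype_n : ¬ ∃ s : F, g.eval (f^[1] γ) = s ^ 2)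
    (htype_s : ∃ s : F, g.eval (f^[2] γ) = s ^ 2)
    (hsep : ∀ i : ℕ, ((fun p : Polynomial F => p.comp fp)^[i] g).Separable)
    (hirr1 : Irreducible (g.comp fp))
    (h : Polynomial F) (hhm : h.Monic) (hhi : Irreducible h)
    (hfac : g.comp (fp.comp fp) = h.comp (X - C γ) * h.comp (-(X - C γ))) :
    (∃ s : F, h.eval (f^[n] γ - γ) = s ^ 2) ∧
    (∀ H : Polynomial F, H.Monic → Irreducible H → H ∣ g.comp (fp.comp fp) →
      ∃ s : F, H.eval (f^[n] γ) = s ^ 2) :=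
  stmt19_general hchar γ c f hf fp hfp n hn horb hmin g hgi hgdeg hirr1 h hhm hhi hfac
end
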